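/- arXiv:1308.6342 — 6 statements merged into one kernel-verified Lean document; each statement's English description precedes it below -/
import Mathlib

section
/- Uniqueness of the normalized potential: Suppose a positive probability distribution p on configurations admits two representations p(x) = (1/Z)·exp(−Σ_c E_c(x_c)) and p(x) = (1/Z')·exp(−Σ_c E'_c(x_c)), where both sums range over all nonempty subsets c of S, Z > 0 and Z' > 0, and every E_c and every E'_c is a potential on c normalized with respect to zero. Then Z = Z' and E_c = E'_c for every nonempty subset c of S. -/
open Finset

/-- A potential `E` on the subset `c` of sites: a real-valued function of
configurations that depends only on the coordinates in `c`. -/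
def DependsOnlyOn {S : Type*} {V : S → Type*} (c : Finset S) (E : (∀ s, V s) → ℝ) : Prop :=
  ∀ x y : ∀ s, V s, (∀ s ∈ c, x s = y s) → E x = E y

/-- A potential is normalized with respect to zero if it vanishes on every
configuration having a zero coordinate inside `c`. -/
def NormalizedZero {S : Type*} {V : S → Type*} [∀ s, Zero (V s)] (c : Finset S)
    (E : (∀ s, V s) → ℝ) : Prop :=
  ∀ x : ∀ s, V s, (∃ t ∈ c, x t = 0) → E x = 0

/-!
Setting to zero every coordinate of `x` outside `a` kills the normalized potentials
that are not supported in `a` and leaves the others unchanged, so the energy of this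
configuration is `∑_{∅ ≠ d ⊆ a} E d x`. Hence the energy function determines, for
every `a`, the sum of the potentials supported in `a`, and these sums determine each
potential by strong induction on its support. At the zero configuration the energy vanishes, which
pins down the normalizing constant.
-/

namespace Finset

variable {α M : Type*} [DecidableEq α] [AddCancelCommMonoid M]

theorem eq_of_forall_sum_powerset_filter_eq {p : Finset α → Prop} [DecidablePred p]
    {f g : Finset α → M}
    (h : ∀ a : Finset α,
      ∑ d ∈ a.powerset.filter p, f d = ∑ d ∈ a.powerset.filter p, g d) :
    ∀ c, p c → f c = g c := by
  intro c
  induction c using Finset.strongInduction with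
  | H c ih =>
    intro hc
    have hmem : c ∈ c.powerset.filter p := mem_filter.mpr ⟨mem_powerset_self c, hc⟩
    have hproper : ∑ d ∈ (c.powerset.filter p).erase c, f d
        = ∑ d ∈ (c.powerset.filter p).erase c, g d := by
      refine sum_congr rfl fun d hd => ?_
      obtain ⟨hdc, hd⟩ := mem_erase.mp hd
      obtain ⟨hd, hpd⟩ := mem_filter.mp hd
      exact ih d (ssubset_of_subset_of_ne (mem_powerset.mp hd) hdc) hpd
    have hc := h c
    rw [← add_sum_erase _ _ hmem, ← add_sum_erase _ _ hmem, hproper] at hc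
    exact add_right_cancel hc

end Finset

section Potentials

variable {S : Type*} [DecidableEq S] {V : S → Type*} [∀ s, Zero (V s)]

theorem DependsOnlyOn.apply_piecewise_zero {c a : Finset S} {E : (∀ s, V s) → ℝ}
    (hE : DependsOnlyOn c E) (hca : c ⊆ a) (x : ∀ s, V s) :
    E (a.piecewise x 0) = E x :=
  hE _ _ fun _ hs => piecewise_eq_of_mem _ _ _ (hca hs)

theorem NormalizedZero.apply_piecewise_zero {c a : Finset S} {E : (∀ s, V s) → ℝ}
    (hE : NormalizedZero c E) (hca : ¬ c ⊆ a) (x : ∀ s, V s) :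
    E (a.piecewise x 0) = 0 := by
  obtain ⟨t, htc, hta⟩ := not_subset.mp hca
  exact hE _ ⟨t, htc, piecewise_eq_of_notMem _ _ _ hta⟩

variable [Fintype S]

theorem sum_apply_piecewise_zero {E : Finset S → (∀ s, V s) → ℝ}
    (hdep : ∀ c : Finset S, c.Nonempty → DependsOnlyOn c (E c))
    (hnorm : ∀ c : Finset S, c.Nonempty → NormalizedZero c (E c))
    (a : Finset S) (x : ∀ s, V s) :
    ∑ c ∈ univ.powerset.filter (fun c : Finset S => c.Nonempty), E c (a.piecewise x 0)
      = ∑ c ∈ a.powerset.filter (fun c : Finset S => c.Nonempty), E c x := by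
  have hsub : a.powerset.filter (fun c : Finset S => c.Nonempty)
      ⊆ univ.powerset.filter (fun c : Finset S => c.Nonempty) :=
    filter_subset_filter _ (powerset_mono.mpr (subset_univ a))
  rw [← sum_subset hsub]
  · refine sum_congr rfl fun c hc => ?_
    obtain ⟨hca, hc⟩ := mem_filter.mp hc
    exact (hdep c hc).apply_piecewise_zero (mem_powerset.mp hca) x
  · intro c hc hca
    have hc := (mem_filter.mp hc).2
    exact (hnorm c hc).apply_piecewise_zero
      (fun h => hca (mem_filter.mpr ⟨mem_powerset.mpr h, hc⟩)) x

theorem sum_apply_zero {E : Finset S → (∀ s, V s) → ℝ}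
    (hdep : ∀ c : Finset S, c.Nonempty → DependsOnlyOn c (E c))
    (hnorm : ∀ c : Finset S, c.Nonempty → NormalizedZero c (E c)) :
    ∑ c ∈ univ.powerset.filter (fun c : Finset S => c.Nonempty), E c 0 = 0 := by
  simpa [filter_singleton] using sum_apply_piecewise_zero hdep hnorm ∅ 0

theorem potential_eq_of_forall_sum_eq {E E' : Finset S → (∀ s, V s) → ℝ}
    (hEdep : ∀ c : Finset S, c.Nonempty → DependsOnlyOn c (E c))
    (hEnorm : ∀ c : Finset S, c.Nonempty → NormalizedZero c (E c))
    (hE'dep : ∀ c : Finset S, c.Nonempty → DependsOnlyOn c (E' c))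
    (hE'norm : ∀ c : Finset S, c.Nonempty → NormalizedZero c (E' c))
    (h : ∀ x, ∑ c ∈ univ.powerset.filter (fun c : Finset S => c.Nonempty), E c x
      = ∑ c ∈ univ.powerset.filter (fun c : Finset S => c.Nonempty), E' c x)
    (c : Finset S) (hc : c.Nonempty) : E c = E' c := by
  funext x
  refine eq_of_forall_sum_powerset_filter_eq (f := (E · x)) (g := (E' · x)) (fun a => ?_) c hc
  rw [← sum_apply_piecewise_zero hEdep hEnorm, ← sum_apply_piecewise_zero hE'dep hE'norm, h]

end Potentials

theorem normalized_potential_uniqueness_general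
    {S : Type*} [Fintype S] [DecidableEq S] {V : S → Type*}
    [∀ s, Zero (V s)]
    (p : (∀ s, V s) → ℝ)
    (Z Z' : ℝ) (hZ : 0 < Z)
    (E E' : Finset S → (∀ s, V s) → ℝ)
    (hEdep : ∀ c : Finset S, c.Nonempty → DependsOnlyOn c (E c))
    (hEnorm : ∀ c : Finset S, c.Nonempty → NormalizedZero c (E c))
    (hE'dep : ∀ c : Finset S, c.Nonempty → DependsOnlyOn c (E' c))
    (hE'norm : ∀ c : Finset S, c.Nonempty → NormalizedZero c (E' c))
    (hrep : ∀ x, p x = (1 / Z) *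
      Real.exp (-(∑ c ∈ Finset.univ.powerset.filter (fun c : Finset S => c.Nonempty), E c x)))
    (hrep' : ∀ x, p x = (1 / Z') *
      Real.exp (-(∑ c ∈ Finset.univ.powerset.filter (fun c : Finset S => c.Nonempty), E' c x))) :
    Z = Z' ∧ ∀ c : Finset S, c.Nonempty → E c = E' c := by
  have hZZ' : Z = Z' := by
    have h0 := (hrep 0).symm.trans (hrep' 0)
    rwa [sum_apply_zero hEdep hEnorm, sum_apply_zero hE'dep hE'norm, neg_zero, Real.exp_zero,
      mul_one, mul_one, one_div, one_div, inv_inj] at h0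
  have henergy : ∀ x, ∑ c ∈ univ.powerset.filter (fun c : Finset S => c.Nonempty), E c x
      = ∑ c ∈ univ.powerset.filter (fun c : Finset S => c.Nonempty), E' c x := by
    intro x
    have hx := (hrep x).symm.trans (hrep' x)
    rw [← hZZ'] at hx
    exact neg_injective (Real.exp_injective (mul_left_cancel₀ (by positivity) hx))
  exact ⟨hZZ', potential_eq_of_forall_sum_eq hEdep hEnorm hE'dep hE'norm henergy⟩

/-- **Uniqueness of the normalized potential.** If a positive probability
distribution `p` admits two Gibbs representations with potentials indexed by all
nonempty subsets of `S`, each normalized with respect to zero, then the partition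
constants coincide and the potentials coincide on every nonempty subset. -/
theorem normalized_potential_uniqueness
    {S : Type*} [Fintype S] [DecidableEq S] {V : S → Type*}
    [∀ s, Fintype (V s)] [∀ s, Zero (V s)]
    (p : (∀ s, V s) → ℝ)
    (hp_pos : ∀ x, 0 < p x) (hp_sum : ∑ x, p x = 1)
    (Z Z' : ℝ) (hZ : 0 < Z) (hZ' : 0 < Z')
    (E E' : Finset S → (∀ s, V s) → ℝ)
    (hEdep : ∀ c : Finset S, c.Nonempty → DependsOnlyOn c (E c))
    (hEnorm : ∀ c : Finset S, c.Nonempty → NormalizedZero c (E c))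
    (hE'dep : ∀ c : Finset S, c.Nonempty → DependsOnlyOn c (E' c))
    (hE'norm : ∀ c : Finset S, c.Nonempty → NormalizedZero c (E' c))
    (hrep : ∀ x, p x = (1 / Z) *
      Real.exp (-(∑ c ∈ Finset.univ.powerset.filter (fun c : Finset S => c.Nonempty), E c x)))
    (hrep' : ∀ x, p x = (1 / Z') *
      Real.exp (-(∑ c ∈ Finset.univ.powerset.filter (fun c : Finset S => c.Nonempty), E' c x))) :
    Z = Z' ∧ ∀ c : Finset S, c.Nonempty → E c = E' c :=
  normalized_potential_uniqueness_general p Z Z' hZ E E' hEdep hEnorm hE'dep hE'norm hrep hrep'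
end

section
/- Existence of the normalized potential: For every positive probability distribution p on configurations there exist a constant Z > 0 and, for each nonempty subset c ⊆ S, a potential E_c on c normalized with respect to zero, such that p(x) = (1/Z)·exp(−Σ_c E_c(x_c)) for every configuration x, where the sum ranges over all nonempty subsets c of S. -/
open Finset

/-!
Set `H x = log p 0 - log p x`, and let `x^b` agree with `x` on `b` and vanish off `b`. Möbius
inversion on the Boolean lattice of subsets of `S` writes `H x = H (x^S)` as `∑_c E_c x` with
`E_c x = ∑_{b ⊆ c} (-1)^|c \ b| H (x^b)`. Each `E_c` only reads `x` on `c`, the empty term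
vanishes because `H 0 = 0`, and if `x t = 0` with `t ∈ c` the terms for `b` and `insert t b`
cancel in pairs. Then `p x = p 0 · exp (-H x)`.
-/

namespace Finset

variable {α M : Type*} [DecidableEq α] [AddCommGroup M]

def moebius (f : Finset α → M) (c : Finset α) : M :=
  ∑ b ∈ c.powerset, (-1 : ℤ) ^ #(c \ b) • f b

theorem moebius_congr {f g : Finset α → M} {c : Finset α} (h : ∀ b ⊆ c, f b = g b) :
    moebius f c = moebius g c :=
  sum_congr rfl fun b hb => by rw [h b (mem_powerset.1 hb)]

theorem moebius_insert (f : Finset α → M) {t : α} {c : Finset α} (ht : t ∉ c) :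
    moebius f (insert t c) = moebius (fun b => f (insert t b)) c - moebius f c := by
  have hsign : ∀ b ⊆ c, #(insert t c \ b) = #(c \ b) + 1 := fun b hb => by
    rw [insert_sdiff_of_notMem _ (notMem_mono hb ht), card_insert_of_notMem (by simp [ht])]
  have hsign_insert : ∀ b, insert t c \ insert t b = c \ b := fun b => by
    rw [insert_sdiff_insert, sdiff_insert_of_notMem ht]
  rw [moebius, sum_powerset_insert ht, moebius, moebius, add_comm, sub_eq_add_neg,
    ← sum_neg_distrib]
  congr 1
  · simp only [hsign_insert]
  · refine sum_congr rfl fun b hb => ?_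
    rw [hsign b (mem_powerset.1 hb), pow_succ, mul_neg_one, neg_smul]

theorem sum_powerset_moebius (f : Finset α → M) (a : Finset α) :
    ∑ c ∈ a.powerset, moebius f c = f a := by
  induction a using Finset.induction_on generalizing f with
  | empty => simp [moebius]
  | insert t a ht ih =>
    have hins : ∀ c ∈ a.powerset,
        moebius f (insert t c) = moebius (fun b => f (insert t b)) c - moebius f c :=
      fun c hc => moebius_insert f (notMem_mono (mem_powerset.1 hc) ht)
    rw [sum_powerset_insert ht, sum_congr rfl hins, sum_sub_distrib, ih, ih]
    abel

theorem moebius_eq_zero_of_insert_eq {f : Finset α → M} {t : α} {c : Finset α} (ht : t ∈ c)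
    (h : ∀ b ⊆ c.erase t, f (insert t b) = f b) : moebius f c = 0 := by
  rw [← insert_erase ht, moebius_insert f (notMem_erase t c), moebius_congr h, sub_self]

end Finset

section NormalizedPotential

variable {S : Type*} [DecidableEq S] {V : S → Type*} [∀ s, Zero (V s)]

noncomputable def normalizedPotential (H : (∀ s, V s) → ℝ) (c : Finset S) (x : ∀ s, V s) : ℝ :=
  moebius (fun b => H (b.piecewise x 0)) c

theorem dependsOnlyOn_normalizedPotential (H : (∀ s, V s) → ℝ) (c : Finset S) :
    DependsOnlyOn c (normalizedPotential H c) := fun x y hxy =>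
  moebius_congr fun b hb => by
    rw [b.piecewise_congr (fun s hs => hxy s (hb hs)) fun _ _ => rfl]

theorem normalizedZero_normalizedPotential (H : (∀ s, V s) → ℝ) (c : Finset S) :
    NormalizedZero c (normalizedPotential H c) := by
  rintro x ⟨t, htc, hxt⟩
  refine moebius_eq_zero_of_insert_eq htc fun b _ => ?_
  rw [piecewise_insert, hxt]
  congr 1
  rw [Function.update_eq_self_iff]
  by_cases htb : t ∈ b <;> simp [htb, hxt]

theorem sum_nonempty_normalizedPotential [Fintype S] (H : (∀ s, V s) → ℝ) (hH : H 0 = 0)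
    (x : ∀ s, V s) :
    ∑ c ∈ univ.powerset.filter (fun c : Finset S => c.Nonempty), normalizedPotential H c x =
      H x := by
  rw [sum_filter_of_ne]
  · exact (sum_powerset_moebius _ univ).trans (by rw [piecewise_univ])
  rintro c - hc
  rw [nonempty_iff_ne_empty]
  rintro rfl
  simp [normalizedPotential, moebius, hH] at hc

end NormalizedPotential

theorem normalized_potential_existence_general
    {S : Type*} [Fintype S] [DecidableEq S] {V : S → Type*}
    [∀ s, Zero (V s)]
    (p : (∀ s, V s) → ℝ)
    (hp_pos : ∀ x, 0 < p x) :
    ∃ (Z : ℝ) (E : Finset S → (∀ s, V s) → ℝ), 0 < Z ∧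
      (∀ c : Finset S, c.Nonempty → DependsOnlyOn c (E c)) ∧
      (∀ c : Finset S, c.Nonempty → NormalizedZero c (E c)) ∧
      (∀ x, p x = (1 / Z) *
        Real.exp (-(∑ c ∈ Finset.univ.powerset.filter (fun c : Finset S => c.Nonempty), E c x))) := by
  set H : (∀ s, V s) → ℝ := fun x => Real.log (p 0) - Real.log (p x)
  refine ⟨1 / p 0, normalizedPotential H, one_div_pos.2 (hp_pos 0),
    fun c _ => dependsOnlyOn_normalizedPotential H c,
    fun c _ => normalizedZero_normalizedPotential H c, fun x => ?_⟩
  rw [sum_nonempty_normalizedPotential H (sub_self _), neg_sub, Real.exp_sub,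
    Real.exp_log (hp_pos x), Real.exp_log (hp_pos 0)]
  field_simp [(hp_pos 0).ne']

/-- **Existence of the normalized potential.** Every positive probability
distribution on configurations admits a Gibbs representation
`p x = (1/Z) exp (−Σ_c E_c(x_c))`, with `Z > 0` and the sum ranging over all
nonempty subsets `c` of `S`, in which every potential `E_c` depends only on the
coordinates in `c` and is normalized with respect to zero. -/
theorem normalized_potential_existence
    {S : Type*} [Fintype S] [DecidableEq S] {V : S → Type*}
    [∀ s, Fintype (V s)] [∀ s, Zero (V s)]
    (p : (∀ s, V s) → ℝ)
    (hp_pos : ∀ x, 0 < p x) (hp_sum : ∑ x, p x = 1) :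
    ∃ (Z : ℝ) (E : Finset S → (∀ s, V s) → ℝ), 0 < Z ∧
      (∀ c : Finset S, c.Nonempty → DependsOnlyOn c (E c)) ∧
      (∀ c : Finset S, c.Nonempty → NormalizedZero c (E c)) ∧
      (∀ x, p x = (1 / Z) *
        Real.exp (-(∑ c ∈ Finset.univ.powerset.filter (fun c : Finset S => c.Nonempty), E c x))) :=
  normalized_potential_existence_general p hp_pos
end

section
/- Marginal factorization over a 1-neighborhood: Let p be a positive Gibbs distribution over C with potentials (E_c)_{c∈C} and partition constant Z, and fix q ∈ C with 1-neighborhood A_q. Then every c ∈ C with c ∩ q ≠ ∅ satisfies c ⊆ A_q, and there exists a strictly positive real-valued function h of configurations of A_q that depends only on the coordinates in A_q∖q, such that the marginal of p on A_q satisfies p_{A_q}(y) = (1/Z)·exp(−Σ_{c∈C, c⊆A_q} E_c(y_c))·h(y) for every configuration y of A_q. -/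
open Finset

/-- The marginal of `p` on `U`: `p_U(y) = Σ { p x : x_U = y }`. -/
def marginal {S : Type*} {V : S → Type*} [Fintype S] [DecidableEq S]
    [∀ s, Fintype (V s)] [∀ s, DecidableEq (V s)]
    (p : (∀ s, V s) → ℝ) (U : Finset S) (y : ∀ s : U, V s) : ℝ :=
  ∑ x ∈ Finset.univ.filter (fun x : ∀ s, V s => ∀ s : U, x s.1 = y s), p x

/-- A potential on `c ⊆ A`, viewed as a function of configurations of `A`:
it depends only on the coordinates in `c`. -/
def DependsOnlyOnSub {S : Type*} {V : S → Type*} (A c : Finset S)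
    (F : (∀ s : A, V s) → ℝ) : Prop :=
  ∀ y z : ∀ s : A, V s, (∀ s : A, s.1 ∈ c → y s = z s) → F y = F z

/-- Zero-normalization for a potential on `c ⊆ A` viewed as a function of
configurations of `A`. -/
def NormalizedZeroSub {S : Type*} {V : S → Type*} [∀ s, Zero (V s)] (A c : Finset S)
    (F : (∀ s : A, V s) → ℝ) : Prop :=
  ∀ y : ∀ s : A, V s, (∃ s : A, s.1 ∈ c ∧ y s = 0) → F y = 0

/-- Extension of a configuration of `A` to a full configuration, by zero. -/
def extendZero {S : Type*} {V : S → Type*} [∀ s, Zero (V s)] [DecidableEq S]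
    (A : Finset S) (y : ∀ s : A, V s) : ∀ s, V s :=
  fun s => if h : s ∈ A then y ⟨s, h⟩ else 0

/-! Split the energy into the cliques inside `A` and the rest. The first part is constant on
each fibre `{x : x_A = y}`, so it comes out of the marginal, leaving `h`, the marginal of
`exp(-Σ_{c ⊄ A} E_c)`. A clique meeting `q` lies in `A`, so the remaining cliques all avoid `q`:
`h` is positive and does not see the coordinates of `y` in `q`. -/

section Marginal

variable {S : Type*} {V : S → Type*}

theorem DependsOnlyOn.mono {c d : Finset S} {E : (∀ s, V s) → ℝ} (hcd : c ⊆ d)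
    (hE : DependsOnlyOn c E) : DependsOnlyOn d E :=
  fun x y hxy => hE x y fun s hs => hxy s (hcd hs)

theorem DependsOnlyOn.comp {c : Finset S} {E : (∀ s, V s) → ℝ} (hE : DependsOnlyOn c E)
    (g : ℝ → ℝ) : DependsOnlyOn c (fun x => g (E x)) :=
  fun x y hxy => congrArg g (hE x y hxy)

theorem dependsOnlyOn_sum {ι : Type*} {c : Finset S} {D : Finset ι} {E : ι → (∀ s, V s) → ℝ}
    (hE : ∀ i ∈ D, DependsOnlyOn c (E i)) : DependsOnlyOn c (fun x => ∑ i ∈ D, E i x) :=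
  fun x y hxy => sum_congr rfl fun i hi => hE i hi x y hxy

variable [DecidableEq S]

theorem DependsOnlyOnSub.mono {A c d : Finset S} {F : (∀ s : A, V s) → ℝ} (hcd : A ∩ c ⊆ d)
    (hF : DependsOnlyOnSub A c F) : DependsOnlyOnSub A d F :=
  fun y z hyz => hF y z fun s hs => hyz s (hcd (mem_inter.mpr ⟨s.2, hs⟩))

@[simp]
theorem extendZero_apply_coe [∀ s, Zero (V s)] (A : Finset S) (y : ∀ s : A, V s) (s : A) :
    extendZero A y s = y s := by
  simp [extendZero]

variable [Fintype S] [∀ s, Fintype (V s)] [∀ s, DecidableEq (V s)]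

theorem dependsOnlyOnSub_marginal {A c : Finset S} {G : (∀ s, V s) → ℝ}
    (hG : DependsOnlyOn c G) : DependsOnlyOnSub A c (marginal G A) := by
  intro y z hyz
  let overwrite (w : ∀ s : A, V s) (x : ∀ s, V s) : ∀ s, V s :=
    fun s => if hs : s ∈ A then w ⟨s, hs⟩ else x s
  have overwrite_mem (w : ∀ s : A, V s) (x : ∀ s, V s) :
      overwrite w x ∈ univ.filter (fun x : ∀ s, V s => ∀ s : A, x s.1 = w s) :=
    mem_filter.mpr ⟨mem_univ _, fun s => by simp [overwrite, s.2]⟩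
  have overwrite_eq_self (w : ∀ s : A, V s) (x : ∀ s, V s) (hx : ∀ s : A, x s.1 = w s) :
      overwrite w x = x := by
    funext s
    by_cases hs : s ∈ A
    · simp [overwrite, hs, hx ⟨s, hs⟩]
    · simp [overwrite, hs]
  have overwrite_overwrite (w w' : ∀ s : A, V s) (x : ∀ s, V s) :
      overwrite w (overwrite w' x) = overwrite w x := by
    funext s
    by_cases hs : s ∈ A <;> simp [overwrite, hs]
  -- overwriting by `z` is a bijection from the fibre over `y` onto the fibre over `z`
  refine sum_nbij' (overwrite z) (overwrite y) (fun x _ => overwrite_mem z x)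
    (fun x _ => overwrite_mem y x)
    (fun x hx => by rw [overwrite_overwrite, overwrite_eq_self y x (mem_filter.mp hx).2])
    (fun x hx => by rw [overwrite_overwrite, overwrite_eq_self z x (mem_filter.mp hx).2])
    (fun x hx => ?_)
  have hxy := (mem_filter.mp hx).2
  refine hG x _ fun s hs => ?_
  by_cases hsA : s ∈ A
  · simp [overwrite, hsA, hxy ⟨s, hsA⟩, hyz ⟨s, hsA⟩ hs]
  · simp [overwrite, hsA]

variable [∀ s, Zero (V s)]

theorem marginal_pos {G : (∀ s, V s) → ℝ} (hG : ∀ x, 0 < G x) (A : Finset S)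
    (y : ∀ s : A, V s) : 0 < marginal G A y :=
  sum_pos (fun x _ => hG x)
    ⟨extendZero A y, mem_filter.mpr ⟨mem_univ _, extendZero_apply_coe A y⟩⟩

theorem marginal_mul_of_dependsOnlyOn {A : Finset S} {F G : (∀ s, V s) → ℝ}
    (hF : DependsOnlyOn A F) (y : ∀ s : A, V s) :
    marginal (fun x => F x * G x) A y = F (extendZero A y) * marginal G A y := by
  rw [marginal, marginal, mul_sum]
  refine sum_congr rfl fun x hx => ?_
  have hxy := (mem_filter.mp hx).2
  rw [hF x (extendZero A y) fun s hs => by simp [extendZero, hs, hxy ⟨s, hs⟩]]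

end Marginal

theorem marginal_factorization_over_one_neighborhood_general
    {S : Type*} [Fintype S] [DecidableEq S] {V : S → Type*}
    [∀ s, Fintype (V s)] [∀ s, DecidableEq (V s)] [∀ s, Zero (V s)]
    (C : Finset (Finset S))
    (E : Finset S → (∀ s, V s) → ℝ)
    (hEdep : ∀ c ∈ C, DependsOnlyOn c (E c))
    (Z : ℝ)
    (p : (∀ s, V s) → ℝ)
    (hp : ∀ x, p x = (1 / Z) * Real.exp (-(∑ c ∈ C, E c x)))
    (q : Finset S)
    (A : Finset S) (hA : A = (C.filter fun c => (c ∩ q).Nonempty).biUnion id) :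
    (∀ c ∈ C, (c ∩ q).Nonempty → c ⊆ A) ∧
    ∃ h : (∀ s : A, V s) → ℝ,
      (∀ y, 0 < h y) ∧ DependsOnlyOnSub A (A \ q) h ∧
      ∀ y : ∀ s : A, V s,
        marginal p A y =
          (1 / Z) * Real.exp (-(∑ c ∈ C.filter (fun c => c ⊆ A), E c (extendZero A y))) * h y := by
  have hsub : ∀ c ∈ C, (c ∩ q).Nonempty → c ⊆ A := fun c hc hcq =>
    hA ▸ subset_biUnion_of_mem id (mem_filter.mpr ⟨hc, hcq⟩)
  set F : (∀ s, V s) → ℝ := fun x => 1 / Z * Real.exp (-(∑ c ∈ C.filter (· ⊆ A), E c x))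
  set G : (∀ s, V s) → ℝ := fun x => Real.exp (-(∑ c ∈ C.filter (¬ · ⊆ A), E c x))
  have hpFG : p = fun x => F x * G x := by
    funext x
    rw [hp, ← sum_filter_add_sum_filter_not C (· ⊆ A), neg_add, Real.exp_add, mul_assoc]
  have hF : DependsOnlyOn A F :=
    (dependsOnlyOn_sum fun c hc => (hEdep c (mem_filter.mp hc).1).mono
      (mem_filter.mp hc).2).comp fun t => 1 / Z * Real.exp (-t)
  have hG : DependsOnlyOn qᶜ G := by
    refine (dependsOnlyOn_sum fun c hc => ?_).comp fun t => Real.exp (-t)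
    obtain ⟨hcC, hcA⟩ := mem_filter.mp hc
    refine (hEdep c hcC).mono (subset_compl_iff_disjoint_right.mpr ?_)
    exact not_disjoint_iff_nonempty_inter.not_right.mpr fun hcq => hcA (hsub c hcC hcq)
  refine ⟨hsub, marginal G A, marginal_pos (fun x => Real.exp_pos _) A,
    (dependsOnlyOnSub_marginal hG).mono fun s hs => ?_, fun y => ?_⟩
  · obtain ⟨hsA, hsq⟩ := mem_inter.mp hs
    exact mem_sdiff.mpr ⟨hsA, mem_compl.mp hsq⟩
  · rw [hpFG, marginal_mul_of_dependsOnlyOn hF]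

/-- **Marginal factorization over a 1-neighborhood.** For a positive Gibbs
distribution `p` over the clique system `C` with potentials `E_c` and partition
constant `Z`, and a clique `q ∈ C` with 1-neighborhood `A = ⋃ {c ∈ C : c ∩ q ≠ ∅}`:
every clique meeting `q` is contained in `A`, and the marginal of `p` on `A`
factors as `(1/Z) · exp(−Σ_{c ∈ C, c ⊆ A} E_c(y_c)) · h(y)` for some strictly
positive function `h` of configurations of `A` depending only on the coordinates
in `A \ q`. -/
theorem marginal_factorization_over_one_neighborhood
    {S : Type*} [Fintype S] [DecidableEq S] {V : S → Type*}
    [∀ s, Fintype (V s)] [∀ s, DecidableEq (V s)] [∀ s, Zero (V s)]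
    (C : Finset (Finset S)) (hC : ∀ c ∈ C, c.Nonempty)
    (E : Finset S → (∀ s, V s) → ℝ)
    (hEdep : ∀ c ∈ C, DependsOnlyOn c (E c))
    (Z : ℝ) (hZ : 0 < Z)
    (p : (∀ s, V s) → ℝ)
    (hp : ∀ x, p x = (1 / Z) * Real.exp (-(∑ c ∈ C, E c x)))
    (hp_sum : ∑ x, p x = 1)
    (q : Finset S) (hq : q ∈ C)
    (A : Finset S) (hA : A = (C.filter fun c => (c ∩ q).Nonempty).biUnion id) :
    (∀ c ∈ C, (c ∩ q).Nonempty → c ⊆ A) ∧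
    ∃ h : (∀ s : A, V s) → ℝ,
      (∀ y, 0 < h y) ∧ DependsOnlyOnSub A (A \ q) h ∧
      ∀ y : ∀ s : A, V s,
        marginal p A y =
          (1 / Z) * Real.exp (-(∑ c ∈ C.filter (fun c => c ⊆ A), E c (extendZero A y))) * h y :=
  marginal_factorization_over_one_neighborhood_general C E hEdep Z p hp q A hA
end

section
/- The LAP argument: Let p be a positive Gibbs distribution over C with potentials (E_c)_{c∈C}, each normalized with respect to zero, and fix q ∈ C with 1-neighborhood A_q. Write the marginal p_{A_q} in its (unique) zero-normalized form p_{A_q}(y) = (1/Z')·exp(−Σ_c F_c(y_c)), where the sum ranges over all nonempty subsets c of A_q, Z' > 0, and each F_c is a potential on c normalized with respect to zero. Then F_q = E_q, i.e., the normalized potential that the marginal assigns to the clique q coincides with the normalized potential that the joint distribution assigns to q. -/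
open Finset

/-! Evaluate both Gibbs forms of the marginal on `A` at the configurations `x^b` that agree with
`x` on `b ⊆ q` and vanish elsewhere. The cliques of `C` missing `q` do not see the coordinates in
`q`, and all `x^b` vanish on `A \ q`, so these cliques contribute the same factor to `p_A(x^b)`
for every `b`. Hence `∑ F_c(x^b) - ∑_{c ∩ q ≠ ∅} E_c(x^b)` is constant in `b`. Möbius inversion
over the subsets of `q` kills constants and, for zero-normalized potentials, keeps exactly the
term of the clique `q`, so `F_q(x) - E_q(x) = 0`. -/

section PowersetMobius

variable {α : Type*} [DecidableEq α]

theorem sum_powerset_filter_superset_neg_one_pow (q c : Finset α) :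
    ∑ b ∈ q.powerset with c ⊆ b, (-1 : ℝ) ^ #(q \ b) = if c = q then 1 else 0 := by
  by_cases hcq : c ⊆ q
  · have hcompl : ∑ b ∈ q.powerset with c ⊆ b, (-1 : ℝ) ^ #(q \ b)
        = ∑ d ∈ (q \ c).powerset, (-1 : ℝ) ^ #d := by
      refine sum_nbij' (q \ ·) (q \ ·) ?_ ?_ ?_ ?_ fun _ _ => rfl
      · intro b hb
        rw [mem_filter, mem_powerset] at hb
        exact mem_powerset.2 (sdiff_subset_sdiff le_rfl hb.2)
      · intro d hd
        rw [mem_powerset] at hd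
        rw [mem_filter, mem_powerset, subset_sdiff]
        exact ⟨sdiff_subset, hcq, disjoint_of_subset_right hd disjoint_sdiff⟩
      · intro b hb
        exact Finset.sdiff_sdiff_eq_self (mem_powerset.1 (mem_filter.1 hb).1)
      · intro d hd
        exact Finset.sdiff_sdiff_eq_self ((mem_powerset.1 hd).trans sdiff_subset)
    have h := congrArg (Int.cast : ℤ → ℝ) (sum_powerset_neg_one_pow_card (x := q \ c))
    push_cast at h
    rw [hcompl, h]
    exact if_congr ⟨fun h => subset_antisymm hcq (sdiff_eq_empty_iff_subset.1 h),
      fun h => h ▸ Finset.sdiff_self q⟩ rfl rfl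
  · have hempty : q.powerset.filter (c ⊆ ·) = ∅ :=
      filter_eq_empty_iff.2 fun b hb hcb => hcq (hcb.trans (mem_powerset.1 hb))
    rw [hempty, sum_empty, if_neg fun h => hcq h.le]

def powersetMobius (q : Finset α) (φ : Finset α → ℝ) : ℝ :=
  ∑ b ∈ q.powerset, (-1 : ℝ) ^ #(q \ b) * φ b

theorem powersetMobius_congr {q : Finset α} {φ ψ : Finset α → ℝ} (h : ∀ b ⊆ q, φ b = ψ b) :
    powersetMobius q φ = powersetMobius q ψ :=
  sum_congr rfl fun b hb => by rw [h b (mem_powerset.1 hb)]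

theorem powersetMobius_sub (q : Finset α) (φ ψ : Finset α → ℝ) :
    powersetMobius q (fun b => φ b - ψ b) = powersetMobius q φ - powersetMobius q ψ := by
  simp only [powersetMobius, mul_sub, sum_sub_distrib]

theorem powersetMobius_const {q : Finset α} (hq : q.Nonempty) (K : ℝ) :
    powersetMobius q (fun _ => K) = 0 := by
  have h := sum_powerset_filter_superset_neg_one_pow q ∅
  rw [filter_true_of_mem fun b _ => empty_subset b, if_neg hq.ne_empty.symm] at h
  rw [powersetMobius, ← sum_mul, h, zero_mul]

end PowersetMobius

theorem Real.log_one_div_mul_exp_neg {Z : ℝ} (hZ : 0 < Z) (u : ℝ) :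
    Real.log (1 / Z * Real.exp (-u)) = -Real.log Z - u := by
  rw [Real.log_mul (by positivity) (Real.exp_ne_zero _), Real.log_exp, one_div, Real.log_inv]
  ring

section Configurations

variable {S : Type*} {V : S → Type*}

theorem DependsOnlyOnSub.comp_restrict {A c : Finset S} {F : (∀ s : A, V s) → ℝ}
    (h : DependsOnlyOnSub A c F) : DependsOnlyOn c fun x => F (A.restrict x) :=
  fun _ _ hxy => h _ _ fun s hs => hxy s hs

theorem NormalizedZeroSub.comp_restrict [∀ s, Zero (V s)] {A c : Finset S}
    {F : (∀ s : A, V s) → ℝ} (h : NormalizedZeroSub A c F) (hcA : c ⊆ A) :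
    NormalizedZero c fun x => F (A.restrict x) :=
  fun _ ⟨t, htc, ht⟩ => h _ ⟨⟨t, hcA htc⟩, htc, ht⟩

variable [DecidableEq S]

theorem NormalizedZero.apply_piecewise_zero_s3 [∀ s, Zero (V s)] {c : Finset S}
    {G : (∀ s, V s) → ℝ} (hnorm : NormalizedZero c G) (hdep : DependsOnlyOn c G)
    (x : ∀ s, V s) (b : Finset S) :
    G (b.piecewise x 0) = if c ⊆ b then G x else 0 := by
  split_ifs with hcb
  · exact hdep _ _ fun s hs => piecewise_eq_of_mem _ _ _ (hcb hs)
  · obtain ⟨t, htc, htb⟩ := not_subset.1 hcb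
    exact hnorm _ ⟨t, htc, piecewise_eq_of_notMem _ _ _ htb⟩

theorem powersetMobius_sum_piecewise_zero [∀ s, Zero (V s)] {q : Finset S}
    {D : Finset (Finset S)} (hqD : q ∈ D) {G : Finset S → (∀ s, V s) → ℝ}
    (hdep : ∀ c ∈ D, DependsOnlyOn c (G c)) (hnorm : ∀ c ∈ D, NormalizedZero c (G c))
    (x : ∀ s, V s) :
    powersetMobius q (fun b => ∑ c ∈ D, G c (b.piecewise x 0)) = G q x := by
  have hterm : ∀ c ∈ D, ∑ b ∈ q.powerset, (-1 : ℝ) ^ #(q \ b) * G c (b.piecewise x 0)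
      = if c = q then G c x else 0 := fun c hc => by
    simp_rw [(hnorm c hc).apply_piecewise_zero_s3 (hdep c hc), mul_ite, mul_zero, ← sum_filter,
      ← sum_mul, sum_powerset_filter_superset_neg_one_pow, ite_mul, one_mul, zero_mul]
  simp_rw [powersetMobius, mul_sum]
  rw [sum_comm, sum_congr rfl hterm, sum_ite_eq' D q, if_pos hqD]

theorem powersetMobius_sum_restrict_piecewise_zero [∀ s, Zero (V s)] {q A : Finset S}
    (hqA : q ⊆ A) (hq : q.Nonempty) {F : Finset S → (∀ s : A, V s) → ℝ}
    (hFdep : ∀ c : Finset S, c ⊆ A → c.Nonempty → DependsOnlyOnSub A c (F c))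
    (hFnorm : ∀ c : Finset S, c ⊆ A → c.Nonempty → NormalizedZeroSub A c (F c))
    (x : ∀ s, V s) :
    powersetMobius q (fun b => ∑ c ∈ A.powerset with c.Nonempty, F c (A.restrict (b.piecewise x 0)))
      = F q (A.restrict x) := by
  refine powersetMobius_sum_piecewise_zero (G := fun c x => F c (A.restrict x))
    (mem_filter.2 ⟨mem_powerset.2 hqA, hq⟩) (fun c hc => ?_) (fun c hc => ?_) x
  all_goals obtain ⟨hcA, hc⟩ := mem_filter.1 hc; rw [mem_powerset] at hcA
  · exact (hFdep c hcA hc).comp_restrict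
  · exact (hFnorm c hcA hc).comp_restrict hcA

variable [Fintype S] [∀ s, Fintype (V s)] [∀ s, DecidableEq (V s)]

theorem marginal_pos_s3 {g : (∀ s, V s) → ℝ} (hg : ∀ z, 0 < g z) (A : Finset S) (w : ∀ s, V s) :
    0 < marginal g A (A.restrict w) :=
  sum_pos (fun z _ => hg z) ⟨w, mem_filter.2 ⟨mem_univ w, fun _ => rfl⟩⟩

theorem marginal_mul_of_dependsOnlyOn_s3 {A : Finset S} {f : (∀ s, V s) → ℝ}
    (hf : DependsOnlyOn A f) (g : (∀ s, V s) → ℝ) (w : ∀ s, V s) :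
    marginal (fun z => f z * g z) A (A.restrict w) = f w * marginal g A (A.restrict w) := by
  rw [marginal, marginal, mul_sum]
  refine sum_congr rfl fun z hz => ?_
  rw [hf z w fun s hs => (mem_filter.1 hz).2 ⟨s, hs⟩]

theorem dependsOnlyOn_marginal_sdiff {A q : Finset S} {g : (∀ s, V s) → ℝ}
    (hg : DependsOnlyOn qᶜ g) (hqA : q ⊆ A) :
    DependsOnlyOn (A \ q) fun w => marginal g A (A.restrict w) := by
  intro w w' hww'
  have hmem : ∀ {u u' z : ∀ s, V s}, (∀ s ∈ A \ q, u s = u' s) →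
      (∀ s : A, z s = u s) → ∀ s : A, q.piecewise u' z s = u' s := fun hu hz s => by
    by_cases hsq : s.1 ∈ q
    · exact piecewise_eq_of_mem _ _ _ hsq
    · rw [piecewise_eq_of_notMem _ _ _ hsq, hz, hu _ (mem_sdiff.2 ⟨s.2, hsq⟩)]
  have hinv : ∀ {u u' z : ∀ s, V s}, (∀ s : A, z s = u s) →
      q.piecewise u (q.piecewise u' z) = z := fun hz => funext fun s => by
    by_cases hsq : s ∈ q
    · rw [piecewise_eq_of_mem _ _ _ hsq, hz ⟨s, hqA hsq⟩]
    · rw [piecewise_eq_of_notMem _ _ _ hsq, piecewise_eq_of_notMem _ _ _ hsq]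
  -- Overwriting the coordinates in `q` is a bijection between the two fibres that `g` ignores.
  refine sum_nbij' (q.piecewise w' ·) (q.piecewise w ·) ?_ ?_ ?_ ?_ ?_
  all_goals simp only [mem_filter, mem_univ, true_and]
  · exact fun z hz => hmem hww' hz
  · exact fun z hz => hmem (fun s hs => (hww' s hs).symm) hz
  · exact fun z hz => hinv hz
  · exact fun z hz => hinv hz
  · exact fun z _ => hg _ _ fun s hs => (piecewise_eq_of_notMem _ _ _ (mem_compl.1 hs)).symm

theorem exists_marginal_eq_gibbs_of_eq_zero [∀ s, Zero (V s)] {C : Finset (Finset S)}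
    {E : Finset S → (∀ s, V s) → ℝ} (hEdep : ∀ c ∈ C, DependsOnlyOn c (E c)) {Z : ℝ}
    {p : (∀ s, V s) → ℝ} (hp : ∀ x, p x = (1 / Z) * Real.exp (-(∑ c ∈ C, E c x)))
    {q A : Finset S} (hqA : q ⊆ A) (hCA : ∀ c ∈ C, (c ∩ q).Nonempty → c ⊆ A) :
    ∃ M > 0, ∀ w : ∀ s, V s, (∀ s ∈ A \ q, w s = 0) →
      marginal p A (A.restrict w) =
        (1 / Z) * Real.exp (-∑ c ∈ C with (c ∩ q).Nonempty, E c w) * M := by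
  set f : (∀ s, V s) → ℝ := fun z => (1 / Z) * Real.exp (-∑ c ∈ C with (c ∩ q).Nonempty, E c z)
  set g : (∀ s, V s) → ℝ := fun z => Real.exp (-∑ c ∈ C with ¬(c ∩ q).Nonempty, E c z)
  have hpfg : p = fun z => f z * g z := funext fun z => by
    rw [hp, ← sum_filter_add_sum_filter_not C fun c => (c ∩ q).Nonempty, neg_add, Real.exp_add,
      mul_assoc]
  have hf : DependsOnlyOn A f := fun z z' hzz' => by
    simp only [f]
    congr 3
    refine sum_congr rfl fun c hc => ?_
    obtain ⟨hcC, hcq⟩ := mem_filter.1 hc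
    exact hEdep c hcC _ _ fun s hs => hzz' s (hCA c hcC hcq hs)
  have hg : DependsOnlyOn qᶜ g := fun z z' hzz' => by
    simp only [g]
    congr 2
    refine sum_congr rfl fun c hc => ?_
    obtain ⟨hcC, hcq⟩ := mem_filter.1 hc
    refine hEdep c hcC _ _ fun s hs => hzz' s (mem_compl.2 fun hsq => hcq ⟨s, ?_⟩)
    exact mem_inter.2 ⟨hs, hsq⟩
  refine ⟨marginal g A (A.restrict 0), marginal_pos_s3 (fun _ => Real.exp_pos _) A 0, fun w hw => ?_⟩
  rw [hpfg, marginal_mul_of_dependsOnlyOn_s3 hf]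
  exact congrArg (f w * ·) (dependsOnlyOn_marginal_sdiff hg hqA w 0 hw)

end Configurations

theorem lap_argument_general
    {S : Type*} [Fintype S] [DecidableEq S] {V : S → Type*}
    [∀ s, Fintype (V s)] [∀ s, DecidableEq (V s)] [∀ s, Zero (V s)]
    (C : Finset (Finset S)) (hC : ∀ c ∈ C, c.Nonempty)
    (E : Finset S → (∀ s, V s) → ℝ)
    (hEdep : ∀ c ∈ C, DependsOnlyOn c (E c))
    (hEnorm : ∀ c ∈ C, NormalizedZero c (E c))
    (Z : ℝ) (hZ : 0 < Z)
    (p : (∀ s, V s) → ℝ)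
    (hp : ∀ x, p x = (1 / Z) * Real.exp (-(∑ c ∈ C, E c x)))
    (q : Finset S) (hq : q ∈ C)
    (A : Finset S) (hA : A = (C.filter fun c => (c ∩ q).Nonempty).biUnion id)
    (Z' : ℝ) (hZ' : 0 < Z')
    (F : Finset S → (∀ s : A, V s) → ℝ)
    (hFdep : ∀ c : Finset S, c ⊆ A → c.Nonempty → DependsOnlyOnSub A c (F c))
    (hFnorm : ∀ c : Finset S, c ⊆ A → c.Nonempty → NormalizedZeroSub A c (F c))
    (hFrep : ∀ y : ∀ s : A, V s,
      marginal p A y =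
        (1 / Z') * Real.exp (-(∑ c ∈ A.powerset.filter (fun c => c.Nonempty), F c y))) :
    ∀ x : ∀ s, V s, F q (A.restrict x) = E q x := by
  intro x
  have hqq : (q ∩ q).Nonempty := by rw [inter_self]; exact hC q hq
  have hCA : ∀ c ∈ C, (c ∩ q).Nonempty → c ⊆ A := fun c hc hcq =>
    hA ▸ subset_biUnion_of_mem id (mem_filter.2 ⟨hc, hcq⟩)
  have hqA : q ⊆ A := hCA q hq hqq
  obtain ⟨M, hM, hmarg⟩ := exists_marginal_eq_gibbs_of_eq_zero hEdep hp hqA hCA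
  have hconst : ∀ b ⊆ q,
      (∑ c ∈ A.powerset with c.Nonempty, F c (A.restrict (b.piecewise x 0))) -
        ∑ c ∈ C with (c ∩ q).Nonempty, E c (b.piecewise x 0) =
      Real.log Z - Real.log Z' - Real.log M := fun b hb => by
    have h := congrArg Real.log <| (hFrep _).symm.trans <| hmarg (b.piecewise x 0) fun s hs =>
      piecewise_eq_of_notMem _ _ _ fun hsb => (mem_sdiff.1 hs).2 (hb hsb)
    rw [Real.log_mul (by positivity) hM.ne', Real.log_one_div_mul_exp_neg hZ,
      Real.log_one_div_mul_exp_neg hZ'] at h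
    linarith
  have hmobius := powersetMobius_congr hconst
  rw [powersetMobius_sub, powersetMobius_const (hC q hq),
    powersetMobius_sum_restrict_piecewise_zero hqA (hC q hq) hFdep hFnorm,
    powersetMobius_sum_piecewise_zero (mem_filter.2 ⟨hq, hqq⟩)
      (fun c hc => hEdep c (mem_filter.1 hc).1) fun c hc => hEnorm c (mem_filter.1 hc).1] at hmobius
  exact sub_eq_zero.1 hmobius

/-- **The LAP argument.** Let `p` be a positive Gibbs distribution over `C` whose
potentials `E_c` are normalized with respect to zero, let `q ∈ C` have
1-neighborhood `A`, and write the marginal of `p` on `A` in zero-normalized form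
with partition constant `Z' > 0` and potentials `F_c` over all nonempty subsets
`c ⊆ A`. Then the potential that the marginal assigns to `q` coincides with the
potential that the joint distribution assigns to `q`: `F_q(x_A) = E_q(x)` for
every configuration `x`. -/
theorem lap_argument
    {S : Type*} [Fintype S] [DecidableEq S] {V : S → Type*}
    [∀ s, Fintype (V s)] [∀ s, DecidableEq (V s)] [∀ s, Zero (V s)]
    (C : Finset (Finset S)) (hC : ∀ c ∈ C, c.Nonempty)
    (E : Finset S → (∀ s, V s) → ℝ)
    (hEdep : ∀ c ∈ C, DependsOnlyOn c (E c))
    (hEnorm : ∀ c ∈ C, NormalizedZero c (E c))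
    (Z : ℝ) (hZ : 0 < Z)
    (p : (∀ s, V s) → ℝ)
    (hp : ∀ x, p x = (1 / Z) * Real.exp (-(∑ c ∈ C, E c x)))
    (hp_sum : ∑ x, p x = 1)
    (q : Finset S) (hq : q ∈ C)
    (A : Finset S) (hA : A = (C.filter fun c => (c ∩ q).Nonempty).biUnion id)
    (Z' : ℝ) (hZ' : 0 < Z')
    (F : Finset S → (∀ s : A, V s) → ℝ)
    (hFdep : ∀ c : Finset S, c ⊆ A → c.Nonempty → DependsOnlyOnSub A c (F c))
    (hFnorm : ∀ c : Finset S, c ⊆ A → c.Nonempty → NormalizedZeroSub A c (F c))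
    (hFrep : ∀ y : ∀ s : A, V s,
      marginal p A y =
        (1 / Z') * Real.exp (-(∑ c ∈ A.powerset.filter (fun c => c.Nonempty), F c y))) :
    ∀ x : ∀ s, V s, F q (A.restrict x) = E q x :=
  lap_argument_general C hC E hEdep hEnorm Z hZ p hp q hq A hA Z' hZ' F hFdep hFnorm hFrep
end

section
/- Clique-marginal matching implies maximum likelihood (Lemma 1): Let p̃ be a probability distribution on configurations and let F be the set of all positive Gibbs distributions over C. If p̂ ∈ F satisfies p̂_c = p̃_c (equality of marginals on c) for every c ∈ C, then p̂ maximizes the expected log-likelihood over F: for every p ∈ F, Σ_x p̃(x)·log p(x) ≤ Σ_x p̃(x)·log p̂(x). -/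
/-!
The log-likelihood of a Gibbs distribution `p` is `-log Z - Σ_c E_c`, a constant plus
functions of the clique coordinates, so its expectation depends only on the total mass and the
clique marginals of the distribution it is taken under. Hence `Σ p̃ log p = Σ p̂ log p` for
every Gibbs `p`, and `Σ p̂ log p ≤ Σ p̂ log p̂` is Gibbs' inequality.
-/

open Finset

/-- `p` is a (positive, normalized) Gibbs distribution over the clique system `C`:
`p x = (1/Z) exp (−Σ_{c ∈ C} E_c(x_c))` for some partition constant `Z > 0` and
potentials `E_c` depending only on the coordinates in `c`, and `p` sums to one. -/
def IsGibbsDistribution {S : Type*} {V : S → Type*} [Fintype S] [DecidableEq S]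
    [∀ s, Fintype (V s)] (C : Finset (Finset S)) (p : (∀ s, V s) → ℝ) : Prop :=
  ∃ (E : Finset S → (∀ s, V s) → ℝ) (Z : ℝ), 0 < Z ∧
    (∀ c ∈ C, DependsOnlyOn c (E c)) ∧
    (∀ x, p x = (1 / Z) * Real.exp (-(∑ c ∈ C, E c x))) ∧
    (∑ x, p x = 1)

theorem sum_mul_log_le_sum_mul_log {ι : Type*} [Fintype ι] {p q : ι → ℝ}
    (hp : ∀ i, 0 < p i) (hq : ∀ i, 0 < q i) (hsum : ∑ i, p i = ∑ i, q i) :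
    ∑ i, q i * Real.log (p i) ≤ ∑ i, q i * Real.log (q i) := by
  have hterm : ∀ i, q i * Real.log (p i) - q i * Real.log (q i) ≤ p i - q i := fun i => by
    have hlog := Real.log_le_sub_one_of_pos (div_pos (hp i) (hq i))
    rw [Real.log_div (hp i).ne' (hq i).ne'] at hlog
    have := mul_le_mul_of_nonneg_left hlog (hq i).le
    rwa [mul_sub, mul_sub, mul_one, mul_div_cancel₀ _ (hq i).ne'] at this
  have := Finset.sum_le_sum fun i (_ : i ∈ univ) => hterm i
  rw [Finset.sum_sub_distrib, Finset.sum_sub_distrib, hsum, sub_self] at this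
  linarith

theorem Finset.sum_mul_eq_of_sum_eq_of_const {ι : Type*} {A : Finset ι} {p q f : ι → ℝ}
    (hf : ∀ x ∈ A, ∀ x' ∈ A, f x = f x') (hsum : ∑ x ∈ A, p x = ∑ x ∈ A, q x) :
    ∑ x ∈ A, p x * f x = ∑ x ∈ A, q x * f x := by
  obtain rfl | ⟨x₀, hx₀⟩ := A.eq_empty_or_nonempty
  · simp
  have hconst : ∀ r : ι → ℝ, ∑ x ∈ A, r x * f x = (∑ x ∈ A, r x) * f x₀ := fun r => by
    rw [Finset.sum_mul]
    exact Finset.sum_congr rfl fun x hx => by rw [hf x hx x₀ hx₀]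
  rw [hconst, hconst, hsum]

section Marginal

variable {S : Type*} [Fintype S] [DecidableEq S] {V : S → Type*}
  [∀ s, Fintype (V s)] [∀ s, DecidableEq (V s)]

theorem sum_eq_sum_marginal_fibers (U : Finset S) (r : (∀ s, V s) → ℝ) :
    ∑ x, r x = ∑ y : ∀ s : U, V s,
      ∑ x ∈ univ.filter (fun x : ∀ s, V s => ∀ s : U, x s.1 = y s), r x := by
  rw [← Finset.sum_fiberwise univ (fun x (s : U) => x s.1) r]
  refine Finset.sum_congr rfl fun y _ => Finset.sum_congr ?_ fun _ _ => rfl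
  exact Finset.filter_congr fun x _ => by simp [funext_iff]

theorem sum_mul_eq_of_marginal_eq {c : Finset S} {p q f : (∀ s, V s) → ℝ}
    (h : ∀ y, marginal p c y = marginal q c y) (hf : DependsOnlyOn c f) :
    ∑ x, p x * f x = ∑ x, q x * f x := by
  rw [sum_eq_sum_marginal_fibers c, sum_eq_sum_marginal_fibers c]
  refine Finset.sum_congr rfl fun y _ => Finset.sum_mul_eq_of_sum_eq_of_const ?_ (h y)
  intro x hx x' hx'
  refine hf x x' fun s hs => ?_
  rw [(Finset.mem_filter.1 hx).2 ⟨s, hs⟩, (Finset.mem_filter.1 hx').2 ⟨s, hs⟩]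

end Marginal

namespace IsGibbsDistribution

variable {S : Type*} [Fintype S] [DecidableEq S] {V : S → Type*} [∀ s, Fintype (V s)]
  {C : Finset (Finset S)} {p : (∀ s, V s) → ℝ}

theorem pos (hp : IsGibbsDistribution C p) (x : ∀ s, V s) : 0 < p x := by
  obtain ⟨E, Z, hZ, -, hform, -⟩ := hp
  rw [hform x]
  positivity

theorem sum_eq_one (hp : IsGibbsDistribution C p) : ∑ x, p x = 1 := by
  obtain ⟨-, -, -, -, -, hsum⟩ := hp
  exact hsum

theorem sum_mul_log_eq_of_marginal_eq [∀ s, DecidableEq (V s)] (hp : IsGibbsDistribution C p)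
    {q r : (∀ s, V s) → ℝ} (hsum : ∑ x, q x = ∑ x, r x)
    (hmatch : ∀ c ∈ C, ∀ y, marginal q c y = marginal r c y) :
    ∑ x, q x * Real.log (p x) = ∑ x, r x * Real.log (p x) := by
  obtain ⟨E, Z, hZ, hdep, hform, -⟩ := hp
  have hlog : ∀ x, Real.log (p x) = -Real.log Z - ∑ c ∈ C, E c x := fun x => by
    rw [hform x, Real.log_mul (by positivity) (Real.exp_ne_zero _), Real.log_exp, one_div,
      Real.log_inv, sub_eq_add_neg]
  have hexpect : ∀ t : (∀ s, V s) → ℝ, ∑ x, t x * Real.log (p x) =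
      -Real.log Z * ∑ x, t x - ∑ c ∈ C, ∑ x, t x * E c x := fun t => by
    simp only [hlog, mul_sub, Finset.mul_sum, Finset.sum_sub_distrib]
    rw [Finset.sum_comm]
    simp only [mul_comm]
  rw [hexpect, hexpect, hsum]
  congr 1
  exact Finset.sum_congr rfl fun c hc => sum_mul_eq_of_marginal_eq (hmatch c hc) (hdep c hc)

end IsGibbsDistribution

theorem clique_marginal_matching_implies_ml_general
    {S : Type*} [Fintype S] [DecidableEq S] {V : S → Type*}
    [∀ s, Fintype (V s)] [∀ s, DecidableEq (V s)]
    (C : Finset (Finset S))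
    (ptilde : (∀ s, V s) → ℝ)
    (hpt_sum : ∑ x, ptilde x = 1)
    (phat : (∀ s, V s) → ℝ)
    (hphat : IsGibbsDistribution C phat)
    (hmatch : ∀ c ∈ C, ∀ y : ∀ s : c, V s, marginal phat c y = marginal ptilde c y) :
    ∀ p : (∀ s, V s) → ℝ, IsGibbsDistribution C p →
      ∑ x, ptilde x * Real.log (p x) ≤ ∑ x, ptilde x * Real.log (phat x) := by
  intro p hp
  have hsum : ∑ x, phat x = ∑ x, ptilde x := by rw [hpt_sum, hphat.sum_eq_one]
  rw [← hp.sum_mul_log_eq_of_marginal_eq hsum hmatch,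
    ← hphat.sum_mul_log_eq_of_marginal_eq hsum hmatch]
  exact sum_mul_log_le_sum_mul_log hp.pos hphat.pos (by rw [hp.sum_eq_one, hphat.sum_eq_one])

/-- **Clique-marginal matching implies maximum likelihood (Lemma 1).** If a
positive Gibbs distribution `p̂` over `C` has the same marginal as the empirical
distribution `p̃` on every clique `c ∈ C`, then `p̂` maximizes the expected
log-likelihood `p ↦ Σ_x p̃(x) log p(x)` over all positive Gibbs distributions
over `C`. -/
theorem clique_marginal_matching_implies_ml
    {S : Type*} [Fintype S] [DecidableEq S] {V : S → Type*}
    [∀ s, Fintype (V s)] [∀ s, DecidableEq (V s)]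
    (C : Finset (Finset S)) (hC : ∀ c ∈ C, c.Nonempty)
    (ptilde : (∀ s, V s) → ℝ)
    (hpt_nonneg : ∀ x, 0 ≤ ptilde x) (hpt_sum : ∑ x, ptilde x = 1)
    (phat : (∀ s, V s) → ℝ)
    (hphat : IsGibbsDistribution C phat)
    (hmatch : ∀ c ∈ C, ∀ y : ∀ s : c, V s, marginal phat c y = marginal ptilde c y) :
    ∀ p : (∀ s, V s) → ℝ, IsGibbsDistribution C p →
      ∑ x, ptilde x * Real.log (p x) ≤ ∑ x, ptilde x * Real.log (phat x) :=
  clique_marginal_matching_implies_ml_general C ptilde hpt_sum phat hphat hmatch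
end

section
/- Explicit clique-marginal-matching estimate (Proposition 1): Let C be a finite collection of nonempty subsets of S, q ∈ C, and A_q its 1-neighborhood (so every c ∈ C satisfies either c ∩ q = ∅, hence c ⊆ S∖q, or c ⊆ A_q). Let p̃ be a probability distribution on configurations whose marginal p̃_{A_q∖q} is strictly positive, and define p̂(x) = p̃_{A_q}(x_{A_q})·p̃_{S∖q}(x_{S∖q}) / p̃_{A_q∖q}(x_{A_q∖q}). Then p̂ is a probability distribution on configurations (it is nonnegative and sums to one), and for every c ∈ C the marginal of p̂ on c equals the marginal of p̃ on c. -/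
/-!
Put `T = A_q` and `W = S ∖ q`. Every site lies in `T` or `W` (since `q ⊆ A_q`) and
`T ∩ W = A_q ∖ q`, so `p̂` is the gluing `p̃_T(x_T) p̃_W(x_W) / p̃_{T∩W}(x_{T∩W})` of two
marginals of `p̃` that agree on the overlap. Summing `p̂` over the configurations with a fixed
restriction `y` to `T` leaves `p̃_T(y) / p̃_{T∩W}(z)` times the sum of `p̃_W` over the
configurations of `W` extending `z = y_{T∩W}`, which is `p̃_{T∩W}(z)`. Hence `p̂_T = p̃_T`, and
symmetrically `p̂_W = p̃_W`. Every clique meets `q` or not, so lies in `T` or in `W`, and its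
marginal is determined by the marginal on `T` or on `W`.
-/

open Finset

section MarginalGluing

variable {S : Type*} [Fintype S] [DecidableEq S] {V : S → Type*}
  [∀ s, Fintype (V s)] [∀ s, DecidableEq (V s)]

theorem marginal_eq_sum_filter_restrict (p : (∀ s, V s) → ℝ) (U : Finset S)
    (y : ∀ s : U, V s) : marginal p U y = ∑ x with U.restrict x = y, p x := by
  unfold marginal
  congr 1
  exact filter_congr fun x _ => by simp [funext_iff]

theorem marginal_nonneg {p : (∀ s, V s) → ℝ} (hp : ∀ x, 0 ≤ p x) (U : Finset S)
    (y : ∀ s : U, V s) : 0 ≤ marginal p U y :=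
  sum_nonneg fun x _ => hp x

theorem sum_marginal (p : (∀ s, V s) → ℝ) (U : Finset S) :
    ∑ y, marginal p U y = ∑ x, p x := by
  simp_rw [marginal_eq_sum_filter_restrict]
  exact sum_fiberwise _ _ _

theorem marginal_eq_sum_marginal_of_subset (p : (∀ s, V s) → ℝ) {c U : Finset S} (h : c ⊆ U)
    (y : ∀ s : c, V s) :
    marginal p c y = ∑ v with restrict₂ h v = y, marginal p U v := by
  simp_rw [marginal_eq_sum_filter_restrict]
  rw [sum_fiberwise_eq_sum_filter]
  simp only [mem_filter, mem_univ, true_and]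
  rfl

theorem marginal_congr_of_subset {p p' : (∀ s, V s) → ℝ} {c U : Finset S} (h : c ⊆ U)
    (hU : marginal p U = marginal p' U) : marginal p c = marginal p' c := by
  funext y
  rw [marginal_eq_sum_marginal_of_subset p h, marginal_eq_sum_marginal_of_subset p' h, hU]

/-- A configuration is determined by its restrictions to `T` and `W`, which only have to agree
on `T ∩ W`. -/
theorem sum_filter_restrict_eq_of_union_eq_univ {β : Type*} [AddCommMonoid β]
    {T W : Finset S} (hTW : T ∪ W = univ) (f : (∀ s : W, V s) → β) (y : ∀ s : T, V s) :
    ∑ x with T.restrict x = y, f (W.restrict x) =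
      ∑ v with restrict₂ (inter_subset_right (s₁ := T)) v = restrict₂ inter_subset_left y,
        f v := by
  have hW : ∀ s, s ∉ T → s ∈ W := fun s hs =>
    ((mem_union.1 (hTW ▸ mem_univ s)).resolve_left hs)
  refine sum_nbij' (fun x => W.restrict x)
    (fun v s => if h : s ∈ T then y ⟨s, h⟩ else v ⟨s, hW s h⟩) ?_ ?_ ?_ ?_ fun _ _ => rfl
  · rintro x hx
    simp only [mem_filter, mem_univ, true_and] at hx ⊢
    rw [← hx]
    rfl
  · rintro v -
    simp only [mem_filter, mem_univ, true_and]
    funext s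
    simp [s.2]
  · rintro x hx
    simp only [mem_filter, mem_univ, true_and] at hx
    funext s
    split_ifs with h
    · exact (congrFun hx ⟨s, h⟩).symm
    · rfl
  · rintro v hv
    simp only [mem_filter, mem_univ, true_and] at hv
    funext s
    dsimp only [restrict]
    split_ifs with h
    · exact (congrFun hv ⟨s.1, mem_inter.2 ⟨h, s.2⟩⟩).symm
    · rfl

/-- `I` stands for `T ∩ W`; it is a separate argument so that the theorem's `A \ q` fits without
rewriting inside dependent types. -/
noncomputable def glueMarginals (p : (∀ s, V s) → ℝ) (T W I : Finset S) (x : ∀ s, V s) : ℝ :=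
  marginal p T (T.restrict x) * marginal p W (W.restrict x) / marginal p I (I.restrict x)

variable {p : (∀ s, V s) → ℝ} {T W I : Finset S}

theorem glueMarginals_comm : glueMarginals p T W I = glueMarginals p W T I := by
  funext x
  rw [glueMarginals, glueMarginals, mul_comm]

theorem glueMarginals_nonneg (hp : ∀ x, 0 ≤ p x) (x : ∀ s, V s) :
    0 ≤ glueMarginals p T W I x :=
  div_nonneg (mul_nonneg (marginal_nonneg hp _ _) (marginal_nonneg hp _ _))
    (marginal_nonneg hp _ _)

theorem marginal_glueMarginals_left (hTW : T ∪ W = univ) (hI : T ∩ W = I)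
    (hpos : ∀ z, marginal p I z ≠ 0) : marginal (glueMarginals p T W I) T = marginal p T := by
  subst hI
  funext y
  set z := restrict₂ inter_subset_left y
  have hfiber : ∀ x, T.restrict x = y → glueMarginals p T W (T ∩ W) x =
      marginal p T y / marginal p (T ∩ W) z * marginal p W (W.restrict x) := by
    rintro x rfl
    rw [glueMarginals, div_mul_eq_mul_div]
    rfl
  calc marginal (glueMarginals p T W (T ∩ W)) T y
      = ∑ x with T.restrict x = y,
          marginal p T y / marginal p (T ∩ W) z * marginal p W (W.restrict x) := by
        rw [marginal_eq_sum_filter_restrict]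
        exact sum_congr rfl fun x hx => hfiber x (mem_filter.1 hx).2
    _ = marginal p T y / marginal p (T ∩ W) z * marginal p (T ∩ W) z := by
        rw [← mul_sum, sum_filter_restrict_eq_of_union_eq_univ hTW,
          ← marginal_eq_sum_marginal_of_subset]
    _ = marginal p T y := div_mul_cancel₀ _ (hpos z)

theorem marginal_glueMarginals_right (hTW : T ∪ W = univ) (hI : T ∩ W = I)
    (hpos : ∀ z, marginal p I z ≠ 0) : marginal (glueMarginals p T W I) W = marginal p W := by
  rw [glueMarginals_comm]
  exact marginal_glueMarginals_left (union_comm T W ▸ hTW) (inter_comm T W ▸ hI) hpos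

end MarginalGluing

/-- **Explicit clique-marginal-matching estimate (Proposition 1).** For a
probability distribution `p̃` with strictly positive marginal on `A \ q`, the
estimate `p̂(x) = p̃_A(x_A) · p̃_{S∖q}(x_{S∖q}) / p̃_{A∖q}(x_{A∖q})` is itself a
probability distribution, and its marginal on every clique `c ∈ C` equals the
marginal of `p̃` on `c`. -/
theorem explicit_clique_marginal_matching_estimate
    {S : Type*} [Fintype S] [DecidableEq S] {V : S → Type*}
    [∀ s, Fintype (V s)] [∀ s, DecidableEq (V s)]
    (C : Finset (Finset S)) (hC : ∀ c ∈ C, c.Nonempty)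
    (q : Finset S) (hq : q ∈ C)
    (A : Finset S) (hA : A = (C.filter fun c => (c ∩ q).Nonempty).biUnion id)
    (ptilde : (∀ s, V s) → ℝ)
    (hpt_nonneg : ∀ x, 0 ≤ ptilde x) (hpt_sum : ∑ x, ptilde x = 1)
    (hpos : ∀ z : ∀ s : (A \ q : Finset S), V s, 0 < marginal ptilde (A \ q) z)
    (phat : (∀ s, V s) → ℝ)
    (hphat : ∀ x, phat x =
      marginal ptilde A (A.restrict x) *
        marginal ptilde (Finset.univ \ q) ((Finset.univ \ q).restrict x) /
        marginal ptilde (A \ q) ((A \ q).restrict x)) :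
    (∀ x, 0 ≤ phat x) ∧ (∑ x, phat x = 1) ∧
      ∀ c ∈ C, ∀ y : ∀ s : c, V s, marginal phat c y = marginal ptilde c y := by
  have hsubA : ∀ c ∈ C, (c ∩ q).Nonempty → c ⊆ A := fun c hc hcq =>
    hA ▸ subset_biUnion_of_mem id (mem_filter.2 ⟨hc, hcq⟩)
  have hqA : q ⊆ A := hsubA q hq (by simpa using hC q hq)
  have hcov : A ∪ univ \ q = univ := eq_univ_of_forall fun s =>
    mem_union.2 ((em (s ∈ q)).imp (hqA ·) (mem_sdiff.2 ⟨mem_univ s, ·⟩))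
  have hI : A ∩ (univ \ q) = A \ q := by ext; simp
  have hpos' := fun z => (hpos z).ne'
  obtain rfl : phat = glueMarginals ptilde A (univ \ q) (A \ q) := funext hphat
  have hmargA := marginal_glueMarginals_left hcov hI hpos'
  have hmargW := marginal_glueMarginals_right hcov hI hpos'
  refine ⟨glueMarginals_nonneg hpt_nonneg, ?_, fun c hc => ?_⟩
  · rw [← sum_marginal _ A, hmargA, sum_marginal, hpt_sum]
  by_cases hcq : (c ∩ q).Nonempty
  · exact congrFun (marginal_congr_of_subset (hsubA c hc hcq) hmargA)
  · refine congrFun (marginal_congr_of_subset (fun s hs => ?_) hmargW)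
    exact mem_sdiff.2 ⟨mem_univ s, fun hsq => hcq ⟨s, mem_inter.2 ⟨hs, hsq⟩⟩⟩
end
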